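/- arXiv:2310.13790 — 8 statements merged into one kernel-verified Lean document; each statement's English description precedes it below -/
import Mathlib

section
/- Let X, Y be indeterminates over a commutative ring R containing q, and for n ∈ ℕ set X_n := ∏_{k=0}^{n−1}(X − (k)_q·Y). Then X_n = Σ_{k=0}^{n} s_q(n,k)·X^k·Y^{n−k} and X^n = Σ_{k=0}^{n} S_q(n,k)·X_k·Y^{n−k}. -/
open MvPolynomial

/-- The twisted integer (q-analog) `(k)_q = 1 + q + ⋯ + q^{k-1}`. -/
def qInt {R : Type*} [CommRing R] (q : R) (n : ℕ) : R := ∑ i ∈ Finset.range n, q ^ i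

/-- Twisted Stirling numbers of the first kind. -/
def sQ {R : Type*} [CommRing R] (q : R) : ℕ → ℕ → R
  | 0, 0 => 1
  | 0, _ + 1 => 0
  | _ + 1, 0 => 0
  | n + 1, k + 1 => sQ q n k - qInt q n * sQ q n (k + 1)

/-- Twisted Stirling numbers of the second kind. -/
def SQ {R : Type*} [CommRing R] (q : R) : ℕ → ℕ → R
  | 0, 0 => 1
  | 0, _ + 1 => 0
  | _ + 1, 0 => 0
  | n + 1, k + 1 => SQ q n k + qInt q (k + 1) * SQ q n (k + 1)

lemma qInt_zero {R : Type*} [CommRing R] (q : R) : qInt q 0 = 0 := by simp [qInt]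

lemma sQ_eq_zero {R : Type*} [CommRing R] (q : R) : ∀ n k, n < k → sQ q n k = 0 := by
  intro n
  induction n with
  | zero =>
    intro k hk
    match k, hk with
    | k + 1, _ => rfl
  | succ n ih =>
    intro k hk
    match k, hk with
    | k + 1, hk =>
      show sQ q n k - qInt q n * sQ q n (k + 1) = 0
      rw [ih k (by omega), ih (k + 1) (by omega)]
      ring

lemma SQ_eq_zero {R : Type*} [CommRing R] (q : R) : ∀ n k, n < k → SQ q n k = 0 := by
  intro n
  induction n with
  | zero =>
    intro k hk
    match k, hk with
    | k + 1, _ => rfl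
  | succ n ih =>
    intro k hk
    match k, hk with
    | k + 1, hk =>
      show SQ q n k + qInt q (k + 1) * SQ q n (k + 1) = 0
      rw [ih k (by omega), ih (k + 1) (by omega)]
      ring

lemma qInt_mul_sQ_zero {R : Type*} [CommRing R] (q : R) (n : ℕ) :
    qInt q n * sQ q n 0 = 0 := by
  cases n with
  | zero => rw [qInt_zero]; ring
  | succ n => show qInt q (n+1) * (0 : R) = 0; ring

lemma part1 {R : Type*} [CommRing R] (q : R) (n : ℕ) :
    (∏ k ∈ Finset.range n,
        (X 0 - C (qInt q k) * X 1) : MvPolynomial (Fin 2) R) =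
      ∑ k ∈ Finset.range (n + 1), C (sQ q n k) * X 0 ^ k * X 1 ^ (n - k) := by
  induction n with
  | zero => simp [sQ]
  | succ n ih =>
    rw [Finset.prod_range_succ, ih, Finset.sum_range_succ' (n := n + 1)]
    have h0 : sQ q (n + 1) 0 = (0 : R) := rfl
    rw [h0]
    simp only [map_zero, zero_mul, add_zero]
    have hrec : ∀ k ∈ Finset.range (n + 1),
        C (sQ q (n + 1) (k + 1)) * X 0 ^ (k + 1) * (X 1 : MvPolynomial (Fin 2) R) ^ (n + 1 - (k + 1)) =
        C (sQ q n k) * X 0 ^ (k + 1) * X 1 ^ (n - k)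
          - C (qInt q n * sQ q n (k + 1)) * X 0 ^ (k + 1) * X 1 ^ (n - k) := by
      intro k hk
      have he : n + 1 - (k + 1) = n - k := by omega
      rw [he]
      show C (sQ q n k - qInt q n * sQ q n (k + 1)) * _ * _ = _
      rw [map_sub]
      ring
    rw [Finset.sum_congr rfl hrec, Finset.sum_sub_distrib]
    rw [mul_sub, Finset.sum_mul, Finset.sum_mul]
    have hA : ∀ k ∈ Finset.range (n + 1),
        C (sQ q n k) * X 0 ^ k * (X 1 : MvPolynomial (Fin 2) R) ^ (n - k) * X 0 =
        C (sQ q n k) * X 0 ^ (k + 1) * X 1 ^ (n - k) := by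
      intro k hk; ring
    rw [Finset.sum_congr rfl hA]
    have hB : (∑ k ∈ Finset.range (n + 1),
        C (sQ q n k) * X 0 ^ k * (X 1 : MvPolynomial (Fin 2) R) ^ (n - k)
          * (C (qInt q n) * X 1)) =
        ∑ k ∈ Finset.range (n + 1),
          C (qInt q n * sQ q n (k + 1)) * X 0 ^ (k + 1) * X 1 ^ (n - k) := by
      rw [Finset.sum_range_succ' (n := n) (f := fun k =>
        C (sQ q n k) * X 0 ^ k * (X 1 : MvPolynomial (Fin 2) R) ^ (n - k)
          * (C (qInt q n) * X 1))]
      rw [Finset.sum_range_succ (n := n) (f := fun k =>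
        C (qInt q n * sQ q n (k + 1)) * X 0 ^ (k + 1) * (X 1 : MvPolynomial (Fin 2) R) ^ (n - k))]
      have hz1 : C (sQ q n 0) * X 0 ^ 0 * (X 1 : MvPolynomial (Fin 2) R) ^ (n - 0)
          * (C (qInt q n) * X 1) = 0 := by
        rw [show C (sQ q n 0) * X 0 ^ 0 * (X 1 : MvPolynomial (Fin 2) R) ^ (n - 0)
          * (C (qInt q n) * X 1) = C (qInt q n * sQ q n 0) * (X 0 ^ 0 * X 1 ^ (n - 0) * X 1)
            from by rw [map_mul]; ring]
        rw [qInt_mul_sQ_zero, map_zero, zero_mul]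
      have hz2 : C (qInt q n * sQ q n (n + 1)) * X 0 ^ (n + 1)
          * (X 1 : MvPolynomial (Fin 2) R) ^ (n - n) = 0 := by
        rw [sQ_eq_zero q n (n + 1) (by omega), mul_zero, map_zero, zero_mul, zero_mul]
      rw [hz1, hz2, add_zero, add_zero]
      refine Finset.sum_congr rfl fun k hk => ?_
      have hk' : k < n := Finset.mem_range.mp hk
      have he : n - (k + 1) + 1 = n - k := by omega
      rw [map_mul, ← he]
      ring
    rw [hB]

lemma part2 {R : Type*} [CommRing R] (q : R) (n : ℕ) :
    (X 0 : MvPolynomial (Fin 2) R) ^ n =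
      ∑ k ∈ Finset.range (n + 1),
        C (SQ q n k) * (∏ j ∈ Finset.range k, (X 0 - C (qInt q j) * X 1)) *
          X 1 ^ (n - k) := by
  induction n with
  | zero => simp [SQ]
  | succ n ih =>
    set P : ℕ → MvPolynomial (Fin 2) R :=
      fun k => ∏ j ∈ Finset.range k, (X 0 - C (qInt q j) * X 1) with hP
    have hPX : ∀ k, P k * X 0 = P (k + 1) + C (qInt q k) * X 1 * P k := by
      intro k
      rw [hP]
      simp only []
      rw [Finset.prod_range_succ]
      ring
    rw [pow_succ, ih, Finset.sum_mul]
    have hsplit : ∀ k ∈ Finset.range (n + 1),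
        C (SQ q n k) * P k * (X 1 : MvPolynomial (Fin 2) R) ^ (n - k) * X 0 =
        C (SQ q n k) * P (k + 1) * X 1 ^ (n - k)
          + C (qInt q k * SQ q n k) * P k * (X 1 ^ (n - k) * X 1) := by
      intro k hk
      have : C (SQ q n k) * P k * (X 1 : MvPolynomial (Fin 2) R) ^ (n - k) * X 0 =
          C (SQ q n k) * (P k * X 0) * X 1 ^ (n - k) := by ring
      rw [this, hPX k, map_mul]
      ring
    rw [Finset.sum_congr rfl hsplit, Finset.sum_add_distrib]
    -- RHS
    rw [Finset.sum_range_succ' (n := n + 1)]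
    have h0 : SQ q (n + 1) 0 = (0 : R) := rfl
    rw [h0]
    simp only [map_zero, zero_mul]
    have hrec : ∀ k ∈ Finset.range (n + 1),
        C (SQ q (n + 1) (k + 1)) * P (k + 1) * (X 1 : MvPolynomial (Fin 2) R) ^ (n + 1 - (k + 1)) =
        C (SQ q n k) * P (k + 1) * X 1 ^ (n - k)
          + C (qInt q (k + 1) * SQ q n (k + 1)) * P (k + 1) * X 1 ^ (n - k) := by
      intro k hk
      have he : n + 1 - (k + 1) = n - k := by omega
      rw [he]
      show C (SQ q n k + qInt q (k + 1) * SQ q n (k + 1)) * _ * _ = _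
      rw [map_add]
      ring
    rw [Finset.sum_congr rfl hrec, Finset.sum_add_distrib, add_zero]
    congr 1
    -- remaining: Σ_{k∈range(n+1)} C(qInt k * SQ n k) P k (X1^{n-k} * X1)
    --          = Σ_{k∈range(n+1)} C(qInt (k+1) * SQ n (k+1)) P (k+1) X1^{n-k}
    rw [Finset.sum_range_succ' (n := n) (f := fun k =>
      C (qInt q k * SQ q n k) * P k * ((X 1 : MvPolynomial (Fin 2) R) ^ (n - k) * X 1))]
    rw [Finset.sum_range_succ (n := n) (f := fun k =>
      C (qInt q (k + 1) * SQ q n (k + 1)) * P (k + 1) * (X 1 : MvPolynomial (Fin 2) R) ^ (n - k))]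
    have hz1 : C (qInt q 0 * SQ q n 0) * P 0 * ((X 1 : MvPolynomial (Fin 2) R) ^ (n - 0) * X 1) = 0 := by
      rw [qInt_zero, zero_mul, map_zero, zero_mul, zero_mul]
    have hz2 : C (qInt q (n + 1) * SQ q n (n + 1)) * P (n + 1)
        * (X 1 : MvPolynomial (Fin 2) R) ^ (n - n) = 0 := by
      rw [SQ_eq_zero q n (n + 1) (by omega), mul_zero, map_zero, zero_mul, zero_mul]
    rw [hz1, hz2, add_zero, add_zero]
    refine Finset.sum_congr rfl fun k hk => ?_
    have hk' : k < n := Finset.mem_range.mp hk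
    have he : n - (k + 1) + 1 = n - k := by omega
    rw [← he]
    ring

/-- For indeterminates `X`, `Y` over `R` and `X_n := ∏_{k=0}^{n−1}(X − (k)_q·Y)`, one has
`X_n = Σ_{k=0}^{n} s_q(n,k)·X^k·Y^{n−k}` and `X^n = Σ_{k=0}^{n} S_q(n,k)·X_k·Y^{n−k}`. -/
theorem stmt2 {R : Type*} [CommRing R] (q : R) (n : ℕ) :
    (∏ k ∈ Finset.range n,
        (X 0 - C (qInt q k) * X 1) : MvPolynomial (Fin 2) R) =
      ∑ k ∈ Finset.range (n + 1), C (sQ q n k) * X 0 ^ k * X 1 ^ (n - k) ∧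
    (X 0 : MvPolynomial (Fin 2) R) ^ n =
      ∑ k ∈ Finset.range (n + 1),
        C (SQ q n k) * (∏ j ∈ Finset.range k, (X 0 - C (qInt q j) * X 1)) *
          X 1 ^ (n - k) := by
  exact ⟨part1 q n, part2 q n⟩
end

section
/- In the ring of Δ-divided powers R⟨ω⟩_Δ, for all n ∈ ℕ one has (x + (p)_q·ω)·ω^{{n}} ≡ q^{pn}·x·ω^{{n}} modulo the R-span of ω^{{n+1}}, ω^{{n+2}}, …. -/
/-- Twisted (Gaussian) binomial coefficients, via the twisted Pascal identity
`C(n+1,k)_q = C(n,k−1)_q + q^k·C(n,k)_q`. -/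
def qBinom {R : Type*} [CommRing R] (q : R) : ℕ → ℕ → R
  | _, 0 => 1
  | 0, _ + 1 => 0
  | n + 1, k + 1 => qBinom q n k + q ^ (k + 1) * qBinom q n (k + 1)

/-- Product of two basis elements `ω^{{n₁}}·ω^{{n₂}}` in the ring of Δ-divided powers:
`Σ_{0≤i≤min(n₁,n₂)} q^{p·i(i−1)/2}·C(n₁+n₂−i,n₁)_{q^p}·C(n₁,i)_{q^p}·(q−1)^i·x^i·ω^{{n₁+n₂−i}}`. -/
noncomputable def deltaBasisMul {R : Type*} [CommRing R] (q x : R) (p : ℕ) (n₁ n₂ : ℕ) :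
    ℕ →₀ R :=
  ∑ i ∈ Finset.range (min n₁ n₂ + 1),
    Finsupp.single (n₁ + n₂ - i)
      (q ^ (p * Nat.choose i 2) * qBinom (q ^ p) (n₁ + n₂ - i) n₁ * qBinom (q ^ p) n₁ i *
        (q - 1) ^ i * x ^ i)

/-- The multiplication of the ring of Δ-divided powers `R⟨ω⟩_Δ`, the free `R`-module
on the basis `(ω^{{n}})_{n∈ℕ}` (identified with `ℕ →₀ R`). -/
noncomputable def deltaMul {R : Type*} [CommRing R] (q x : R) (p : ℕ) (f g : ℕ →₀ R) :
    ℕ →₀ R :=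
  f.sum fun n₁ a => g.sum fun n₂ b => (a * b) • deltaBasisMul q x p n₁ n₂

lemma qBinom_one {R : Type*} [CommRing R] (q : R) : ∀ n, qBinom q n 1 = qInt q n
  | 0 => rfl
  | n + 1 => by
    show qBinom q n 0 + q ^ (0 + 1) * qBinom q n (0 + 1) = _
    rw [qBinom_one q n]
    show qBinom q n 0 + q ^ (0 + 1) * qInt q n = qInt q (n + 1)
    rw [show qBinom q n 0 = 1 from by cases n <;> rfl, qInt, qInt, geom_sum_succ]
    ring

/-- In `R⟨ω⟩_Δ`, for all `n ∈ ℕ`: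
`(x + (p)_q·ω)·ω^{{n}} ≡ q^{pn}·x·ω^{{n}}` modulo the `R`-span of `ω^{{n+1}}, ω^{{n+2}}, …`,
i.e. the difference has vanishing coefficients in all degrees `m ≤ n`. -/
theorem stmt5 {R : Type*} [CommRing R] (q x : R) (p : ℕ) (n : ℕ) :
    ∀ m ≤ n,
      (deltaMul q x p (Finsupp.single 0 x + Finsupp.single 1 (qInt q p)) (Finsupp.single n 1) -
        Finsupp.single n (q ^ (p * n) * x)) m = 0 := by
  intro m hm
  have hmul : deltaMul q x p (Finsupp.single 0 x + Finsupp.single 1 (qInt q p))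
      (Finsupp.single n 1)
      = x • deltaBasisMul q x p 0 n + qInt q p • deltaBasisMul q x p 1 n := by
    unfold deltaMul
    rw [Finsupp.sum_add_index' (by simp) (by intro a b₁ b₂; simp [add_mul, add_smul, Finsupp.sum_add])]
    rw [Finsupp.sum_single_index (by simp), Finsupp.sum_single_index (by simp),
      Finsupp.sum_single_index (by simp), Finsupp.sum_single_index (by simp)]
    simp
  have hqb0 : ∀ k : ℕ, qBinom (q ^ p) k 0 = 1 := fun k => by cases k <;> rfl
  have hqb11 : qBinom (q ^ p) 1 1 = 1 := by simp [qBinom]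
  have h0 : ∀ k : ℕ, deltaBasisMul q x p 0 k = Finsupp.single k 1 := by
    intro k
    rw [deltaBasisMul, show min 0 k + 1 = 1 by omega, Finset.sum_range_one,
      show (q : R) ^ (p * Nat.choose 0 2) * qBinom (q ^ p) (0 + k - 0) 0 * qBinom (q ^ p) 0 0 *
        (q - 1) ^ 0 * x ^ 0 = 1 from by simp [hqb0], show 0 + k - 0 = k by omega]
  rw [hmul, h0 n]
  rcases n with _ | k
  · -- n = 0, m = 0
    interval_cases m
    have h1 : deltaBasisMul q x p 1 0 = Finsupp.single 1 1 := by
      rw [deltaBasisMul, show min 1 0 + 1 = 1 by omega, Finset.sum_range_one,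
        show (q : R) ^ (p * Nat.choose 0 2) * qBinom (q ^ p) (1 + 0 - 0) 1 * qBinom (q ^ p) 1 0 *
          (q - 1) ^ 0 * x ^ 0 = 1 from by simp [hqb0, hqb11], show 1 + 0 - 0 = 1 by omega]
    rw [h1]
    simp
  · have h1 : deltaBasisMul q x p 1 (k + 1) =
        Finsupp.single (k + 2) (qBinom (q ^ p) (k + 2) 1) +
        Finsupp.single (k + 1) (qBinom (q ^ p) (k + 1) 1 * (q - 1) * x) := by
      rw [deltaBasisMul]
      rw [show min 1 (k + 1) + 1 = 2 by omega, Finset.sum_range_succ, Finset.sum_range_one,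
        show 1 + (k + 1) - 0 = k + 2 by omega, show 1 + (k + 1) - 1 = k + 1 by omega]
      congr 1
      · congr 1
        simp [hqb0]
      · congr 1
        simp [hqb11]
    rw [h1]
    simp only [qBinom_one]
    rcases eq_or_lt_of_le hm with rfl | hlt
    · simp [Finsupp.single_apply, show ¬ (k + 2 = k + 1) by omega]
      -- goal: x + qInt q p * (qInt (q^p) (k+1) * (q-1) * x) - q^(p*(k+1)) * x = 0 (some form)
      have key : (q - 1) * qInt q p = q ^ p - 1 := by
        simpa [qInt] using mul_comm (∑ i ∈ Finset.range p, q ^ i) (q - 1) ▸ geom_sum_mul q p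
      have key2 : (q ^ p - 1) * qInt (q ^ p) (k + 1) = q ^ (p * (k + 1)) - 1 := by
        have := geom_sum_mul (q ^ p) (k + 1)
        rw [← pow_mul] at this
        simpa [qInt, mul_comm] using this
      linear_combination x * key2 + x * qInt (q ^ p) (k + 1) * key
    · simp [Finsupp.single_apply, show ¬ (k + 2 = m) by omega, show ¬ (k + 1 = m) by omega]
end

section
/- Let W be a ring, R = W[[q−1]], p a positive integer, and γ the continuous W-algebra endomorphism of R with γ(q) = q^{p+1}. A W-linear map D : R → M to an R-module M satisfying D(αβ) = D(α)β + γ(α)D(β) (a q^p-derivation) satisfies D((q−1)^{n+1}R) ⊆ (q−1)^n M for all n ∈ ℕ. -/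
/-- Let `W` be a ring, `R = W[[q−1]]` (realized as `W⟦X⟧` with `q = X + 1`), and `γ` the
`W`-algebra endomorphism of `R` with `γ(q) = q^{p+1}`.  A `W`-linear map `D : R → M` to an
`R`-module `M` satisfying the twisted Leibniz rule `D(αβ) = D(α)β + γ(α)D(β)` (a
`q^p`-derivation) satisfies `D((q−1)^{n+1}R) ⊆ (q−1)^n M` for all `n ∈ ℕ`. -/
theorem stmt8 {W : Type*} [CommRing W] (p : ℕ) (hp : 0 < p)
    (M : Type*) [AddCommGroup M] [Module (PowerSeries W) M] [Module W M]
    [IsScalarTower W (PowerSeries W) M]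
    (γ : PowerSeries W →ₐ[W] PowerSeries W)
    (hγ : γ (PowerSeries.X + 1) = (PowerSeries.X + 1) ^ (p + 1))
    (D : PowerSeries W →ₗ[W] M)
    (hD : ∀ α β : PowerSeries W, D (α * β) = β • D α + γ α • D β)
    (n : ℕ) (F : PowerSeries W)
    (hF : F ∈ Ideal.span {(PowerSeries.X : PowerSeries W)} ^ (n + 1)) :
    D F ∈ (Ideal.span {(PowerSeries.X : PowerSeries W)} ^ n) •
      (⊤ : Submodule (PowerSeries W) M) := by
  set I : Ideal (PowerSeries W) := Ideal.span {(PowerSeries.X : PowerSeries W)} with hI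
  have hγX : γ PowerSeries.X ∈ I := by
    have : γ PowerSeries.X = (PowerSeries.X + 1) ^ (p + 1) - 1 := by
      have := hγ
      rw [map_add, map_one] at this
      linear_combination this
    rw [this]
    rw [hI, Ideal.mem_span_singleton]
    rw [PowerSeries.X_dvd_iff]
    simp
  have key : ∀ k : ℕ, D (PowerSeries.X ^ (k + 1)) ∈ (I ^ k) • (⊤ : Submodule (PowerSeries W) M) := by
    intro k
    induction k with
    | zero => simp
    | succ k ih =>
      have : (PowerSeries.X : PowerSeries W) ^ (k + 2) = PowerSeries.X ^ (k + 1) * PowerSeries.X := by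
        ring
      rw [this, hD]
      apply Submodule.add_mem
      · have hX : (PowerSeries.X : PowerSeries W) ∈ I := Ideal.subset_span rfl
        have : I ^ (k + 1) • (⊤ : Submodule (PowerSeries W) M)
            = I • (I ^ k • (⊤ : Submodule (PowerSeries W) M)) := by
          rw [← Submodule.smul_assoc, smul_eq_mul, pow_succ, mul_comm]
        rw [this]
        exact Submodule.smul_mem_smul hX ih
      · have : γ (PowerSeries.X ^ (k + 1)) ∈ I ^ (k + 1) := by
          rw [map_pow]
          exact Ideal.pow_mem_pow hγX _
        exact Submodule.smul_mem_smul this Submodule.mem_top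
  rw [hI, Ideal.span_singleton_pow, Ideal.mem_span_singleton] at hF
  obtain ⟨g, rfl⟩ := hF
  rw [hD]
  apply Submodule.add_mem
  · exact Submodule.smul_mem _ g (key n)
  · have : γ (PowerSeries.X ^ (n + 1)) ∈ I ^ n := by
      rw [map_pow]
      exact Ideal.pow_le_pow_right (Nat.le_succ n) (Ideal.pow_mem_pow hγX _)
    exact Submodule.smul_mem_smul this Submodule.mem_top
end

section
/- In R = W[[q−1]], one has (p)_{q^{p+1}} = λ·(p)_q where λ = 1 + (q²−q)·∂_{q^p}((p)_q) is a unit of R. -/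
section TwistedDerivation

variable {A : Type*} [CommRing A] (γ : A →+* A) (d : A →+ A)
  (hd : ∀ a b, d (a * b) = d a * b + γ a * d b)
include hd

theorem twistedDeriv_one : d 1 = 0 := by
  simpa using hd 1 1

theorem mul_twistedDeriv_pow {q : A} {n : ℕ} (hγ : γ q = q ^ (n + 1)) (hdq : d q = 1) (k : ℕ) :
    q * d (q ^ k) = q ^ k * qInt (q ^ n) k := by
  induction k with
  | zero => simp [twistedDeriv_one γ d hd, qInt]
  | succ k ih =>
    rw [pow_succ', hd, hdq, hγ, qInt, geom_sum_succ, ← qInt]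
    linear_combination q ^ (n + 1) * ih

theorem qInt_pow_succ_eq {q : A} {n : ℕ} (hγ : γ q = q ^ (n + 1)) (hdq : d q = 1) (m : ℕ) :
    qInt (q ^ (n + 1)) m = qInt q m + (q ^ 2 - q) * qInt q n * d (qInt q m) := by
  have hterm : ∀ k, (q ^ (n + 1)) ^ k = q ^ k + (q - 1) * qInt q n * (q * d (q ^ k)) := by
    intro k
    rw [mul_twistedDeriv_pow γ d hd hγ hdq, ← pow_mul, add_one_mul, pow_add, pow_mul, qInt, qInt]
    linear_combination (-(q ^ k)) * geom_sum_mul (q ^ n) k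
      - (q ^ k * ∑ j ∈ Finset.range k, (q ^ n) ^ j) * geom_sum_mul q n
  simp only [qInt, hterm, Finset.sum_add_distrib, map_sum, ← Finset.mul_sum]
  ring

end TwistedDerivation

theorem PowerSeries.isUnit_one_add_mul_of_constantCoeff_eq_zero {W : Type*} [CommRing W]
    {a : PowerSeries W} (ha : constantCoeff a = 0) (f : PowerSeries W) : IsUnit (1 + a * f) := by
  simp [isUnit_iff_constantCoeff, ha]

theorem stmt12_general {W : Type*} [CommRing W] (p : ℕ)
    (γ : PowerSeries W →ₐ[W] PowerSeries W)
    (hγ : γ (PowerSeries.X + 1) = (PowerSeries.X + 1) ^ (p + 1))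
    (d : PowerSeries W →ₗ[W] PowerSeries W)
    (hd : ∀ α β : PowerSeries W, d (α * β) = d α * β + γ α * d β)
    (hdq : d (PowerSeries.X + 1) = 1) :
    qInt ((PowerSeries.X + 1 : PowerSeries W) ^ (p + 1)) p =
      (1 + ((PowerSeries.X + 1) ^ 2 - (PowerSeries.X + 1)) *
          d (qInt (PowerSeries.X + 1 : PowerSeries W) p)) *
        qInt (PowerSeries.X + 1 : PowerSeries W) p ∧
    IsUnit (1 + ((PowerSeries.X + 1 : PowerSeries W) ^ 2 - (PowerSeries.X + 1)) *
        d (qInt (PowerSeries.X + 1 : PowerSeries W) p)) := by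
  refine ⟨?_, PowerSeries.isUnit_one_add_mul_of_constantCoeff_eq_zero (by simp) _⟩
  have h := qInt_pow_succ_eq γ.toRingHom d.toAddMonoidHom hd hγ hdq p
  rw [LinearMap.toAddMonoidHom_coe] at h
  linear_combination h

/-- In `R = W[[q−1]]` (with `q = X+1`), one has `(p)_{q^{p+1}} = λ·(p)_q`, where
`λ = 1 + (q²−q)·∂_{q^p}((p)_q)` is a unit of `R`; here `∂_{q^p}` is the `q^p`-derivation
(with respect to `γ(q) = q^{p+1}`) with `∂_{q^p}(q) = 1`. -/
theorem stmt12 {W : Type*} [CommRing W] (p : ℕ) (hp : 0 < p)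
    (γ : PowerSeries W →ₐ[W] PowerSeries W)
    (hγ : γ (PowerSeries.X + 1) = (PowerSeries.X + 1) ^ (p + 1))
    (d : PowerSeries W →ₗ[W] PowerSeries W)
    (hd : ∀ α β : PowerSeries W, d (α * β) = d α * β + γ α * d β)
    (hdq : d (PowerSeries.X + 1) = 1) :
    qInt ((PowerSeries.X + 1 : PowerSeries W) ^ (p + 1)) p =
      (1 + ((PowerSeries.X + 1) ^ 2 - (PowerSeries.X + 1)) *
          d (qInt (PowerSeries.X + 1 : PowerSeries W) p)) *
        qInt (PowerSeries.X + 1 : PowerSeries W) p ∧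
    IsUnit (1 + ((PowerSeries.X + 1 : PowerSeries W) ^ 2 - (PowerSeries.X + 1)) *
        d (qInt (PowerSeries.X + 1 : PowerSeries W) p)) :=
  stmt12_general p γ hγ d hd hdq
end

section
/- If p belongs to the Jacobson radical of W, there exists a unique Δ-derivation ∂ on the free rank-one R-module R{1} with generator e such that ∂((q−1)e) = (p/q)·e; explicitly ∂(e) = (1/(q²−q))·((p+1)/(p+1)_q − 1)·e, which is well-defined since (p+1)_q ≡ p+1 mod (q−1) and (p+1)_q is a unit of R. -/
/-!
A Δ-derivation `D` on the free module `R·e` satisfies `D α = ∂_Δ α + γ(α) D(1)`, so it is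
determined by `D 1`, and any value `c` of `D 1` gives one. With `q = X + 1` and
`u = (p+1)_q` we have `γ(q - 1) = q^{p+1} - 1 = (q - 1) u`, so the condition on `D (q - 1)`
reads `(q - 1) u D(1) = p/q - (p)_q`. The right side vanishes mod `q - 1`, `u` is a unit
because `u ≡ p + 1 mod (q - 1)` and `p` is in the Jacobson radical, and `q - 1` is a
non-zero-divisor; hence `D(1)` exists and is unique, and solving gives the formula.
-/

section DeltaDerivation

variable {W A : Type*} [CommRing W] [CommRing A] [Algebra W A]
  (γ : A →ₐ[W] A) (dΔ : A →ₗ[W] A)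

def IsDeltaDerivation (D : A →ₗ[W] A) : Prop :=
  ∀ α s : A, D (α * s) = dΔ α * s + γ α * D s

variable {γ dΔ}

theorem IsDeltaDerivation.map_one_eq_zero (hdΔ : IsDeltaDerivation γ dΔ dΔ) : dΔ 1 = 0 := by
  simpa using hdΔ 1 1

theorem IsDeltaDerivation.apply_eq {D : A →ₗ[W] A} (hD : IsDeltaDerivation γ dΔ D) (α : A) :
    D α = dΔ α + γ α * D 1 := by
  simpa using hD α 1

variable (γ dΔ)

def deltaDerivationOfApplyOne (c : A) : A →ₗ[W] A where
  toFun α := dΔ α + γ α * c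
  map_add' a b := by simp only [map_add]; ring
  map_smul' w a := by simp only [map_smul, RingHom.id_apply, smul_add, smul_mul_assoc]

variable {γ dΔ}

theorem isDeltaDerivation_deltaDerivationOfApplyOne (hdΔ : IsDeltaDerivation γ dΔ dΔ) (c : A) :
    IsDeltaDerivation γ dΔ (deltaDerivationOfApplyOne γ dΔ c) := by
  intro α s
  simp only [deltaDerivationOfApplyOne, LinearMap.coe_mk, AddHom.coe_mk, hdΔ α s, map_mul]
  ring

theorem existsUnique_isDeltaDerivation_apply_eq (hdΔ : IsDeltaDerivation γ dΔ dΔ) {t b : A}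
    (hreg : IsLeftRegular (γ t)) (hdvd : γ t ∣ b - dΔ t) :
    ∃! D : A →ₗ[W] A, IsDeltaDerivation γ dΔ D ∧ D t = b := by
  obtain ⟨c, hc⟩ := hdvd
  refine ⟨deltaDerivationOfApplyOne γ dΔ c,
    ⟨isDeltaDerivation_deltaDerivationOfApplyOne hdΔ c, ?_⟩, ?_⟩
  · change dΔ t + γ t * c = b
    rw [← hc]; ring
  · rintro D ⟨hD, hDt⟩
    have hD1 : D 1 = c := hreg <| by
      change γ t * D 1 = γ t * c
      rw [← hc, ← hDt, hD.apply_eq t]; ring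
    ext α
    rw [hD.apply_eq α, hD1]
    rfl

end DeltaDerivation

namespace PowerSeries

variable {W : Type*} [CommRing W]

theorem constantCoeff_qInt_X_add_one (n : ℕ) :
    constantCoeff (qInt (X + 1 : W⟦X⟧) n) = n := by
  simp [qInt]

theorem X_dvd_qInt_X_add_one_sub (n : ℕ) : (X : W⟦X⟧) ∣ qInt (X + 1) n - n := by
  simp [X_dvd_iff, constantCoeff_qInt_X_add_one]

theorem isUnit_qInt_X_add_one_of_mem_jacobson {n : ℕ} (hn : (n : W) ∈ (⊥ : Ideal W).jacobson) :
    IsUnit (qInt (X + 1 : W⟦X⟧) (n + 1)) := by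
  rw [isUnit_iff_constantCoeff, constantCoeff_qInt_X_add_one]
  simpa using Ideal.mem_jacobson_bot.mp hn 1

theorem qInt_X_add_one_mul_X (n : ℕ) : qInt (X + 1 : W⟦X⟧) n * X = (X + 1) ^ n - 1 := by
  rw [qInt, ← geom_sum_mul, add_sub_cancel_right]

theorem map_X_eq_X_mul_qInt {n : ℕ} (γ : W⟦X⟧ →ₐ[W] W⟦X⟧) (hγ : γ (X + 1) = (X + 1) ^ n) :
    γ X = X * qInt (X + 1) n := by
  rw [mul_comm, qInt_X_add_one_mul_X, ← hγ, map_add, map_one, add_sub_cancel_right]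

theorem isUnit_X_add_one : IsUnit (X + 1 : W⟦X⟧) := by
  simp [isUnit_iff_constantCoeff]

theorem X_dvd_natCast_mul_inverse_X_add_one_sub_qInt (n : ℕ) :
    (X : W⟦X⟧) ∣ n * Ring.inverse (X + 1) - qInt (X + 1) n := by
  have h : constantCoeff (Ring.inverse (X + 1 : W⟦X⟧)) = 1 := by
    simpa using congrArg constantCoeff (Ring.mul_inverse_cancel (X + 1 : W⟦X⟧) isUnit_X_add_one)
  simp [X_dvd_iff, constantCoeff_qInt_X_add_one, h]

end PowerSeries

theorem sq_sub_mul_eq_of_sub_one_mul_mul_eq {A : Type*} [CommRing A] {q u s c a : A}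
    (hq : IsUnit q) (hu : IsUnit u) (hus : u = q * s + 1)
    (hc : (q - 1) * u * c = a * Ring.inverse q - s) :
    (q ^ 2 - q) * c = (a + 1) * Ring.inverse u - 1 := by
  have hqq := Ring.mul_inverse_cancel q hq
  have huu := Ring.mul_inverse_cancel u hu
  linear_combination Ring.inverse u * q * hc - (q ^ 2 - q) * c * huu
    + a * Ring.inverse u * hqq + Ring.inverse u * hus - huu

-- `R{1}` is modelled by `R = W⟦X⟧` itself with `e = 1`, and `q = X + 1`.
theorem stmt14_general {W : Type*} [CommRing W] (p : ℕ)
    (hjac : (p : W) ∈ Ideal.jacobson (⊥ : Ideal W))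
    (γ : PowerSeries W →ₐ[W] PowerSeries W)
    (hγ : γ (PowerSeries.X + 1) = (PowerSeries.X + 1) ^ (p + 1))
    (dΔ : PowerSeries W →ₗ[W] PowerSeries W)
    (hdΔ : ∀ α β : PowerSeries W, dΔ (α * β) = dΔ α * β + γ α * dΔ β)
    (hdΔq : dΔ (PowerSeries.X + 1) = qInt (PowerSeries.X + 1 : PowerSeries W) p) :
    (qInt (PowerSeries.X + 1 : PowerSeries W) (p + 1) - ((p : PowerSeries W) + 1) ∈
        Ideal.span {(PowerSeries.X : PowerSeries W)}) ∧
    IsUnit (qInt (PowerSeries.X + 1 : PowerSeries W) (p + 1)) ∧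
    (∃! D : PowerSeries W →ₗ[W] PowerSeries W,
      (∀ (α s : PowerSeries W), D (α * s) = dΔ α * s + γ α * D s) ∧
      D (PowerSeries.X : PowerSeries W) =
        (p : PowerSeries W) * Ring.inverse (PowerSeries.X + 1 : PowerSeries W)) ∧
    ∀ D : PowerSeries W →ₗ[W] PowerSeries W,
      (∀ (α s : PowerSeries W), D (α * s) = dΔ α * s + γ α * D s) →
      D (PowerSeries.X : PowerSeries W) =
        (p : PowerSeries W) * Ring.inverse (PowerSeries.X + 1 : PowerSeries W) →
      ((PowerSeries.X + 1 : PowerSeries W) ^ 2 - (PowerSeries.X + 1)) * D 1 =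
        ((p : PowerSeries W) + 1) *
            Ring.inverse (qInt (PowerSeries.X + 1 : PowerSeries W) (p + 1)) - 1 := by
  have hu := PowerSeries.isUnit_qInt_X_add_one_of_mem_jacobson hjac
  have hγX := PowerSeries.map_X_eq_X_mul_qInt γ hγ
  have hdΔX : dΔ PowerSeries.X = qInt (PowerSeries.X + 1) p := by
    rw [← hdΔq, map_add, IsDeltaDerivation.map_one_eq_zero hdΔ, add_zero]
  refine ⟨?_, hu, existsUnique_isDeltaDerivation_apply_eq hdΔ ?_ ?_, fun D hD hDX => ?_⟩
  · simpa [Ideal.mem_span_singleton] using PowerSeries.X_dvd_qInt_X_add_one_sub (W := W) (p + 1)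
  · rw [hγX]
    exact IsLeftRegular.mul PowerSeries.X_mul_injective hu.isRegular.left
  · rw [hγX, hu.mul_right_dvd, hdΔX]
    exact PowerSeries.X_dvd_natCast_mul_inverse_X_add_one_sub_qInt p
  · refine sq_sub_mul_eq_of_sub_one_mul_mul_eq (s := qInt (PowerSeries.X + 1) p)
      PowerSeries.isUnit_X_add_one hu geom_sum_succ ?_
    rw [add_sub_cancel_right, ← hγX, ← hDX, ← hdΔX, IsDeltaDerivation.apply_eq hD PowerSeries.X]
    ring

/-- Let `R = W[[q−1]]` (with `q = X+1`), `γ` the `W`-algebra endomorphism with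
`γ(q) = q^{p+1}` and `∂_Δ` the Δ-derivation of `R` with `∂_Δ(q) = (p)_q`.  If `p` lies in
the Jacobson radical of `W`, then `(p+1)_q ≡ p+1 mod (q−1)`, `(p+1)_q` is a unit of `R`,
and there is a unique Δ-derivation `D` on the free rank-one module `R·e` (identified with
`R`, `e = 1`) such that `D((q−1)·e) = (p/q)·e`; it satisfies explicitly
`(q²−q)·D(e) = (p+1)/(p+1)_q − 1`. -/
theorem stmt14 {W : Type*} [CommRing W] (p : ℕ) (hp : 0 < p)
    (hjac : (p : W) ∈ Ideal.jacobson (⊥ : Ideal W))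
    (γ : PowerSeries W →ₐ[W] PowerSeries W)
    (hγ : γ (PowerSeries.X + 1) = (PowerSeries.X + 1) ^ (p + 1))
    (dΔ : PowerSeries W →ₗ[W] PowerSeries W)
    (hdΔ : ∀ α β : PowerSeries W, dΔ (α * β) = dΔ α * β + γ α * dΔ β)
    (hdΔq : dΔ (PowerSeries.X + 1) = qInt (PowerSeries.X + 1 : PowerSeries W) p) :
    (qInt (PowerSeries.X + 1 : PowerSeries W) (p + 1) - ((p : PowerSeries W) + 1) ∈
        Ideal.span {(PowerSeries.X : PowerSeries W)}) ∧
    IsUnit (qInt (PowerSeries.X + 1 : PowerSeries W) (p + 1)) ∧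
    (∃! D : PowerSeries W →ₗ[W] PowerSeries W,
      (∀ (α s : PowerSeries W), D (α * s) = dΔ α * s + γ α * D s) ∧
      D (PowerSeries.X : PowerSeries W) =
        (p : PowerSeries W) * Ring.inverse (PowerSeries.X + 1 : PowerSeries W)) ∧
    ∀ D : PowerSeries W →ₗ[W] PowerSeries W,
      (∀ (α s : PowerSeries W), D (α * s) = dΔ α * s + γ α * D s) →
      D (PowerSeries.X : PowerSeries W) =
        (p : PowerSeries W) * Ring.inverse (PowerSeries.X + 1 : PowerSeries W) →
      ((PowerSeries.X + 1 : PowerSeries W) ^ 2 - (PowerSeries.X + 1)) * D 1 =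
        ((p : PowerSeries W) + 1) *
            Ring.inverse (qInt (PowerSeries.X + 1 : PowerSeries W) (p + 1)) - 1 :=
  stmt14_general p hjac γ hγ dΔ hdΔ hdΔq
end

section
/- For all r ∈ ℕ, in R = W[[q−1]] one has (p^{r+1})_q ≡ p·(p^r)_q modulo (p^r)_q², and for 0 ≤ i ≤ p^r, (p^{r+1} − ip)_q ≡ −q^{−ip}·(ip)_q modulo (p^r)_q. -/
/-!
Factor `(ab)_q = (a)_q · (b)_{q^a}`; since `(a)_q (q - 1) = q^a - 1` divides `q^{aj} - 1`,
`(b)_{q^a} ≡ b` modulo `(a)_q`, which gives the first congruence with `a = p^r`, `b = p`.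
For the second, `(N)_q = (m)_q + q^m (N - m)_q`, so `(N - m)_q + q^{-m} (m)_q = q^{-m} (N)_q`,
which is divisible by `(p^r)_q` when `N = p^{r+1}`.
-/

namespace qInt

variable {R : Type*} [CommRing R] (q : R)

lemma add (a b : ℕ) : qInt q (a + b) = qInt q a + q ^ a * qInt q b := by
  simp [qInt, Finset.sum_range_add, Finset.mul_sum, pow_add]

lemma mul (a b : ℕ) : qInt q (a * b) = qInt q a * qInt (q ^ a) b := by
  induction b with
  | zero => simp [qInt]
  | succ b ih =>
    rw [Nat.mul_succ, add, ih]
    simp only [qInt, Finset.sum_range_succ, ← pow_mul]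
    ring

lemma mul_sub_one (n : ℕ) : qInt q n * (q - 1) = q ^ n - 1 :=
  geom_sum_mul q n

lemma dvd_mul_right (a b : ℕ) : qInt q a ∣ qInt q (a * b) :=
  ⟨_, mul q a b⟩

lemma sub_one_dvd_sub_natCast (n : ℕ) : q - 1 ∣ qInt q n - n := by
  have hsum : qInt q n - n = ∑ j ∈ Finset.range n, (q ^ j - 1) := by
    simp [qInt, Finset.sum_sub_distrib]
  rw [hsum]
  exact Finset.dvd_sum fun j _ => sub_one_dvd_pow_sub_one q j

lemma dvd_qInt_pow_sub_natCast (a b : ℕ) : qInt q a ∣ qInt (q ^ a) b - b := by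
  have h := sub_one_dvd_sub_natCast (q ^ a) b
  rw [← mul_sub_one] at h
  exact (Dvd.intro _ rfl).trans h

lemma mul_sub_natCast_mul_mem_span_sq (a b : ℕ) :
    qInt q (a * b) - b * qInt q a ∈ Ideal.span {qInt q a ^ 2} := by
  rw [Ideal.mem_span_singleton, mul, sq,
    show qInt q a * qInt (q ^ a) b - b * qInt q a = qInt q a * (qInt (q ^ a) b - b) by ring]
  exact mul_dvd_mul_left _ (dvd_qInt_pow_sub_natCast q a b)

lemma sub_add_inverse_pow_mul {q : R} (hq : IsUnit q) {m N : ℕ} (hm : m ≤ N) :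
    qInt q (N - m) + Ring.inverse q ^ m * qInt q m = Ring.inverse q ^ m * qInt q N := by
  have hinv : Ring.inverse q ^ m * q ^ m = 1 := by
    rw [← mul_pow, Ring.inverse_mul_cancel q hq, one_pow]
  conv_rhs => rw [← Nat.add_sub_cancel' hm, add, mul_add, ← mul_assoc, hinv, one_mul]
  ring

end qInt

theorem stmt15_general {W : Type*} [CommRing W] (p : ℕ) (r : ℕ) :
    (qInt (PowerSeries.X + 1 : PowerSeries W) (p ^ (r + 1)) -
        (p : PowerSeries W) * qInt (PowerSeries.X + 1 : PowerSeries W) (p ^ r) ∈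
      Ideal.span {(qInt (PowerSeries.X + 1 : PowerSeries W) (p ^ r)) ^ 2}) ∧
    ∀ i : ℕ, i ≤ p ^ r →
      qInt (PowerSeries.X + 1 : PowerSeries W) (p ^ (r + 1) - i * p) +
          (Ring.inverse (PowerSeries.X + 1 : PowerSeries W)) ^ (i * p) *
            qInt (PowerSeries.X + 1 : PowerSeries W) (i * p) ∈
        Ideal.span {qInt (PowerSeries.X + 1 : PowerSeries W) (p ^ r)} := by
  have hq : IsUnit (PowerSeries.X + 1 : PowerSeries W) := by
    simp [PowerSeries.isUnit_iff_constantCoeff]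
  refine ⟨by simpa only [pow_succ] using qInt.mul_sub_natCast_mul_mem_span_sq _ (p ^ r) p,
    fun i hi => ?_⟩
  have hle : i * p ≤ p ^ (r + 1) := pow_succ p r ▸ Nat.mul_le_mul_right p hi
  rw [qInt.sub_add_inverse_pow_mul hq hle, Ideal.mem_span_singleton, pow_succ]
  exact (qInt.dvd_mul_right _ _ _).mul_left _

/-- Let `p` be a prime, `W` a `p`-adically complete ring and `R = W[[q−1]]` (with
`q = X+1`, a unit).  For all `r ∈ ℕ`:
`(p^{r+1})_q ≡ p·(p^r)_q mod ((p^r)_q)²`, and for `0 ≤ i ≤ p^r`,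
`(p^{r+1} − ip)_q ≡ −q^{−ip}·(ip)_q mod (p^r)_q`. -/
theorem stmt15 {W : Type*} [CommRing W] (p : ℕ) (hp : p.Prime)
    [IsAdicComplete (Ideal.span {(p : W)}) W] (r : ℕ) :
    (qInt (PowerSeries.X + 1 : PowerSeries W) (p ^ (r + 1)) -
        (p : PowerSeries W) * qInt (PowerSeries.X + 1 : PowerSeries W) (p ^ r) ∈
      Ideal.span {(qInt (PowerSeries.X + 1 : PowerSeries W) (p ^ r)) ^ 2}) ∧
    ∀ i : ℕ, i ≤ p ^ r →
      qInt (PowerSeries.X + 1 : PowerSeries W) (p ^ (r + 1) - i * p) +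
          (Ring.inverse (PowerSeries.X + 1 : PowerSeries W)) ^ (i * p) *
            qInt (PowerSeries.X + 1 : PowerSeries W) (i * p) ∈
        Ideal.span {qInt (PowerSeries.X + 1 : PowerSeries W) (p ^ r)} :=
  stmt15_general p r
end

section
/- Let M and N be R-modules with Δ-derivations ∂_M, ∂_N and let γ_M = Id + (q²−q)∂_M. Then the formula ∂(s ⊗ t) = ∂_M(s) ⊗ t + γ_M(s) ⊗ ∂_N(t) defines a Δ-derivation on M ⊗_R N. -/
/-!
The heart of the matter is the identity `γ(f) = f + (q² - q) ∂_Δ(f)` on `R = W⟦q - 1⟧`. The defect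
`δ = γ - id - (q² - q) ∂_Δ` is `W`-linear, kills `1`, and satisfies `δ(X g) = γ(X) δ(g)` because
`δ(X) = q^{p+1} - q - (q² - q)(p)_q = 0`; since `X ∣ γ(X)`, every `δ(f)` is divisible by all powers
of `X`, hence zero.

With this identity, `s ⊗ t ↦ ∂_M s ⊗ t + γ_M(s) ⊗ ∂_N t` is `R`-balanced: both `(r s) ⊗ t` and
`s ⊗ (r t)` are sent to `∂_Δ(r) (s ⊗ t) + γ(r) ∂(s ⊗ t)`, which also shows that the induced map
is a Δ-derivation.
-/

open TensorProduct

open PowerSeries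

theorem pow_succ_eq_add_mul_qInt {R : Type*} [CommRing R] (q : R) (n : ℕ) :
    q ^ (n + 1) = q + (q ^ 2 - q) * qInt q n := by
  rw [qInt]
  linear_combination (-q) * geom_sum_mul q n

theorem map_one_eq_zero_of_twisted_leibniz {R : Type*} [Ring R] {γ d : R → R} (hγ : γ 1 = 1)
    (hd : ∀ a b, d (a * b) = d a * b + γ a * d b) : d 1 = 0 := by
  simpa [hγ] using hd 1 1

namespace PowerSeries

variable {A : Type*} [CommRing A]

theorem linearMap_eq_zero_of_map_X_mul (δ : A⟦X⟧ →ₗ[A] A⟦X⟧) (h1 : δ 1 = 0) {u : A⟦X⟧}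
    (hu : X ∣ u) (hX : ∀ g, δ (X * g) = u * δ g) : δ = 0 := by
  have hdvd : ∀ n f, X ^ n ∣ δ f := by
    intro n
    induction n with
    | zero => simp
    | succ n ih =>
      intro f
      have hC : δ (C (constantCoeff f)) = 0 := by
        rw [← mul_one (C _), ← smul_eq_C_mul, map_smul, h1, smul_zero]
      rw [f.eq_X_mul_shift_add_const, map_add, hX, hC, add_zero, pow_succ']
      exact mul_dvd_mul hu (ih _)
  ext f n
  exact X_pow_dvd_iff.mp (hdvd (n + 1) f) n (Nat.lt_succ_self n)

theorem apply_eq_add_mul_of_twisted_leibniz (γ : A⟦X⟧ →ₐ[A] A⟦X⟧) (d : A⟦X⟧ →ₗ[A] A⟦X⟧)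
    (hd : ∀ f g, d (f * g) = d f * g + γ f * d g) {c : A⟦X⟧} (hc : X ∣ c)
    (hX : γ X = X + c * d X) (f : A⟦X⟧) : γ f = f + c * d f := by
  let δ : A⟦X⟧ →ₗ[A] A⟦X⟧ := γ.toLinearMap - LinearMap.id - LinearMap.mulLeft A c ∘ₗ d
  have hδ : ∀ f, δ f = γ f - f - c * d f := fun _ => rfl
  have hd1 : d 1 = 0 := map_one_eq_zero_of_twisted_leibniz (map_one γ) hd
  have hδX : ∀ g, δ (X * g) = γ X * δ g := by
    intro g
    simp only [hδ, map_mul, hd, hX]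
    ring
  have hγX : X ∣ γ X := hX ▸ dvd_add dvd_rfl (dvd_mul_of_dvd_left hc _)
  have hδf := hδ f
  rw [linearMap_eq_zero_of_map_X_mul δ (by simp [hδ, hd1]) hγX hδX, LinearMap.zero_apply] at hδf
  linear_combination -hδf

end PowerSeries

namespace TensorProduct

variable {W R M N : Type*} [CommSemiring W] [CommRing R]
  [AddCommGroup M] [Module R M] [Module W M] [AddCommGroup N] [Module R N] [Module W N]
  {c : R} {d γ : R → R} {DM : M →ₗ[W] M} {DN : N →ₗ[W] N}

variable (c DM DN) in
def twistedDerivationBilin : M →+ N →+ M ⊗[R] N :=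
  AddMonoidHom.mk'
    (fun s => AddMonoidHom.mk' (fun t => DM s ⊗ₜ t + (s + c • DM s) ⊗ₜ DN t)
      fun t₁ t₂ => by simp only [map_add, tmul_add]; abel)
    fun s₁ s₂ => by
      ext t
      simp only [AddMonoidHom.mk'_apply, AddMonoidHom.add_apply, map_add, smul_add, add_tmul]
      abel

theorem twistedDerivationBilin_apply (s : M) (t : N) :
    twistedDerivationBilin c DM DN s t = DM s ⊗ₜ t + (s + c • DM s) ⊗ₜ DN t := rfl

theorem twistedDerivationBilin_smul_left (hγ : ∀ r, γ r = r + c * d r)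
    (hDM : ∀ (r : R) (s : M), DM (r • s) = d r • s + γ r • DM s) (r : R) (s : M) (t : N) :
    twistedDerivationBilin c DM DN (r • s) t =
      d r • s ⊗ₜ t + γ r • twistedDerivationBilin c DM DN s t := by
  have hγM : r • s + c • (d r • s + γ r • DM s) = γ r • (s + c • DM s) := by
    rw [hγ]; module
  calc twistedDerivationBilin c DM DN (r • s) t
      = (d r • s) ⊗ₜ t + (γ r • DM s) ⊗ₜ t + (γ r • (s + c • DM s)) ⊗ₜ DN t := by
        rw [twistedDerivationBilin_apply, hDM, hγM, add_tmul]
    _ = d r • s ⊗ₜ t + γ r • twistedDerivationBilin c DM DN s t := by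
        simp only [twistedDerivationBilin_apply, smul_add, smul_tmul', add_assoc]

theorem twistedDerivationBilin_smul_right (hγ : ∀ r, γ r = r + c * d r)
    (hDN : ∀ (r : R) (t : N), DN (r • t) = d r • t + γ r • DN t) (r : R) (s : M) (t : N) :
    twistedDerivationBilin c DM DN s (r • t) =
      d r • s ⊗ₜ t + γ r • twistedDerivationBilin c DM DN s t := by
  have hDMγ : r • DM s + d r • (s + c • DM s) = d r • s + γ r • DM s := by
    rw [hγ]; module
  calc twistedDerivationBilin c DM DN s (r • t)
      = (r • DM s) ⊗ₜ t + (d r • (s + c • DM s)) ⊗ₜ t + (γ r • (s + c • DM s)) ⊗ₜ DN t := by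
        rw [twistedDerivationBilin_apply, hDN, tmul_add, smul_tmul, smul_tmul, smul_tmul, add_assoc]
    _ = (d r • s) ⊗ₜ t + (γ r • DM s) ⊗ₜ t + (γ r • (s + c • DM s)) ⊗ₜ DN t := by
        rw [← add_tmul, hDMγ, add_tmul]
    _ = d r • s ⊗ₜ t + γ r • twistedDerivationBilin c DM DN s t := by
        simp only [twistedDerivationBilin_apply, smul_add, smul_tmul', add_assoc]

theorem twistedDerivationBilin_baseSMul_left [SMulCommClass R W M] (w : W) (s : M) (t : N) :
    twistedDerivationBilin c DM DN (w • s) t = w • twistedDerivationBilin c DM DN s t := by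
  simp only [twistedDerivationBilin_apply, map_smul, smul_comm c w, smul_add, smul_tmul']

variable [SMulCommClass R W M]

def twistedDerivation (hγ : ∀ r, γ r = r + c * d r)
    (hDM : ∀ (r : R) (s : M), DM (r • s) = d r • s + γ r • DM s)
    (hDN : ∀ (r : R) (t : N), DN (r • t) = d r • t + γ r • DN t) :
    M ⊗[R] N →ₗ[W] M ⊗[R] N where
  toFun := liftAddHom (twistedDerivationBilin c DM DN) fun r s t => by
    rw [twistedDerivationBilin_smul_left hγ hDM, twistedDerivationBilin_smul_right hγ hDN]
  map_add' := map_add _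
  map_smul' w z := by
    induction z using TensorProduct.induction_on with
    | zero => simp
    | tmul s t =>
      simp only [smul_tmul', liftAddHom_tmul, twistedDerivationBilin_baseSMul_left,
        RingHom.id_apply]
    | add z₁ z₂ h₁ h₂ => simp only [smul_add, map_add, h₁, h₂]

theorem twistedDerivation_tmul (hγ : ∀ r, γ r = r + c * d r)
    (hDM : ∀ (r : R) (s : M), DM (r • s) = d r • s + γ r • DM s)
    (hDN : ∀ (r : R) (t : N), DN (r • t) = d r • t + γ r • DN t) (s : M) (t : N) :
    twistedDerivation hγ hDM hDN (s ⊗ₜ t) = DM s ⊗ₜ t + (s + c • DM s) ⊗ₜ DN t := rfl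

theorem twistedDerivation_smul (hγ : ∀ r, γ r = r + c * d r)
    (hDM : ∀ (r : R) (s : M), DM (r • s) = d r • s + γ r • DM s)
    (hDN : ∀ (r : R) (t : N), DN (r • t) = d r • t + γ r • DN t) (r : R) (z : M ⊗[R] N) :
    twistedDerivation hγ hDM hDN (r • z) = d r • z + γ r • twistedDerivation hγ hDM hDN z := by
  induction z using TensorProduct.induction_on with
  | zero => simp
  | tmul s t =>
    rw [smul_tmul']
    exact twistedDerivationBilin_smul_left hγ hDM r s t
  | add z₁ z₂ h₁ h₂ => simp only [smul_add, map_add, h₁, h₂]; abel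

end TensorProduct

theorem stmt17_general {W : Type*} [CommRing W] (p : ℕ)
    (γ : PowerSeries W →ₐ[W] PowerSeries W)
    (hγ : γ (PowerSeries.X + 1) = (PowerSeries.X + 1) ^ (p + 1))
    (dΔ : PowerSeries W →ₗ[W] PowerSeries W)
    (hdΔ : ∀ α β : PowerSeries W, dΔ (α * β) = dΔ α * β + γ α * dΔ β)
    (hdΔq : dΔ (PowerSeries.X + 1) = qInt (PowerSeries.X + 1 : PowerSeries W) p)
    (M N : Type*) [AddCommGroup M] [Module (PowerSeries W) M]
    [AddCommGroup N] [Module (PowerSeries W) N]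
    [Module W M]
    [Module W N]
    [SMulCommClass (PowerSeries W) W M]
    (DM : M →ₗ[W] M)
    (hDM : ∀ (α : PowerSeries W) (s : M), DM (α • s) = dΔ α • s + γ α • DM s)
    (DN : N →ₗ[W] N)
    (hDN : ∀ (α : PowerSeries W) (t : N), DN (α • t) = dΔ α • t + γ α • DN t) :
    ∃ D : (M ⊗[PowerSeries W] N) →ₗ[W] (M ⊗[PowerSeries W] N),
      (∀ (s : M) (t : N),
        D (s ⊗ₜ t) = DM s ⊗ₜ t +
          (s + (((PowerSeries.X + 1) ^ 2 - (PowerSeries.X + 1) : PowerSeries W)) • DM s) ⊗ₜ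
            DN t) ∧
      ∀ (α : PowerSeries W) (z : M ⊗[PowerSeries W] N),
        D (α • z) = dΔ α • z + γ α • D z := by
  have hd1 : dΔ 1 = 0 := map_one_eq_zero_of_twisted_leibniz (map_one γ) hdΔ
  have hγX : γ X = X + ((X + 1) ^ 2 - (X + 1)) * dΔ X := by
    have hdX : dΔ X = dΔ (X + 1) := by rw [map_add, hd1, add_zero]
    have hγX1 : γ X = γ (X + 1) - 1 := by rw [map_add, map_one, add_sub_cancel_right]
    rw [hγX1, hdX, hγ, hdΔq, pow_succ_eq_add_mul_qInt]
    ring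
  have hkey := apply_eq_add_mul_of_twisted_leibniz γ dΔ hdΔ ⟨X + 1, by ring⟩ hγX
  exact ⟨twistedDerivation hkey hDM hDN, twistedDerivation_tmul hkey hDM hDN,
    twistedDerivation_smul hkey hDM hDN⟩

/-- Let `R = W[[q−1]]` (with `q = X+1`), `γ` the `W`-algebra endomorphism with
`γ(q) = q^{p+1}`, `∂_Δ` the Δ-derivation of `R` with `∂_Δ(q) = (p)_q`.  Given Δ-derivations
`D_M`, `D_N` on `R`-modules `M`, `N` and `γ_M := Id + (q²−q)·D_M`, the formula
`s ⊗ t ↦ D_M(s) ⊗ t + γ_M(s) ⊗ D_N(t)` defines a Δ-derivation on `M ⊗_R N`. -/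
theorem stmt17 {W : Type*} [CommRing W] (p : ℕ) (hp : 0 < p)
    (γ : PowerSeries W →ₐ[W] PowerSeries W)
    (hγ : γ (PowerSeries.X + 1) = (PowerSeries.X + 1) ^ (p + 1))
    (dΔ : PowerSeries W →ₗ[W] PowerSeries W)
    (hdΔ : ∀ α β : PowerSeries W, dΔ (α * β) = dΔ α * β + γ α * dΔ β)
    (hdΔq : dΔ (PowerSeries.X + 1) = qInt (PowerSeries.X + 1 : PowerSeries W) p)
    (M N : Type*) [AddCommGroup M] [Module (PowerSeries W) M]
    [AddCommGroup N] [Module (PowerSeries W) N]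
    [Module W M] [IsScalarTower W (PowerSeries W) M]
    [Module W N] [IsScalarTower W (PowerSeries W) N]
    [SMulCommClass (PowerSeries W) W M]
    (DM : M →ₗ[W] M)
    (hDM : ∀ (α : PowerSeries W) (s : M), DM (α • s) = dΔ α • s + γ α • DM s)
    (DN : N →ₗ[W] N)
    (hDN : ∀ (α : PowerSeries W) (t : N), DN (α • t) = dΔ α • t + γ α • DN t) :
    ∃ D : (M ⊗[PowerSeries W] N) →ₗ[W] (M ⊗[PowerSeries W] N),
      (∀ (s : M) (t : N),
        D (s ⊗ₜ t) = DM s ⊗ₜ t +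
          (s + (((PowerSeries.X + 1) ^ 2 - (PowerSeries.X + 1) : PowerSeries W)) • DM s) ⊗ₜ
            DN t) ∧
      ∀ (α : PowerSeries W) (z : M ⊗[PowerSeries W] N),
        D (α • z) = dΔ α • z + γ α • D z :=
  stmt17_general p γ hγ dΔ hdΔ hdΔq M N DM hDM DN hDN
end

section
/- Let M be a complete R-module with a Δ-derivation ∂_M such that M is (q−1)-torsion free and M/(q−1)M is ℤ-torsion free. Then the canonical map ker(∂_M) → M/(q−1)M is injective. (Key step: the map induced by ∂_M on the (q−1)-adic graded piece Gr^n M → Gr^{n−1} M is multiplication by (p+1)^n − 1, which is injective under the hypotheses.) -/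
open Finset

section Ring

variable {R : Type*} [CommRing R]

theorem sub_one_dvd_qInt_sub_natCast (q : R) (k : ℕ) : q - 1 ∣ qInt q k - k := by
  have h : qInt q k - k = ∑ i ∈ range k, (q ^ i - 1) := by simp [qInt, sum_sub_distrib]
  rw [h]
  exact dvd_sum fun i _ => sub_one_dvd_pow_sub_one q i

theorem map_sub_one_of_map_eq_pow {γ : R →+* R} {q : R} {k : ℕ} (hγ : γ q = q ^ k) :
    γ (q - 1) = qInt q k * (q - 1) := by
  rw [map_sub, map_one, hγ, qInt, geom_sum_mul]

theorem dvd_mul_geom_sum_sub {x δ u : R} {a : ℤ} (hδ : x ∣ δ - (a - 1 : ℤ)) (hu : x ∣ u - a)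
    (n : ℕ) : x ∣ δ * ∑ i ∈ range n, u ^ i - (a ^ n - 1 : ℤ) := by
  simp only [← Ideal.mem_span_singleton, ← Ideal.Quotient.eq_zero_iff_mem, map_sub,
    sub_eq_zero] at hδ hu ⊢
  simp only [map_mul, map_sum, map_pow, hu, hδ, map_intCast]
  push_cast
  rw [mul_comm, geom_sum_mul]

variable {γ : R →+* R} {d : R → R}

theorem map_one_of_leibniz (hd : ∀ α β, d (α * β) = d α * β + γ α * d β) : d 1 = 0 := by
  simpa using hd 1 1

theorem map_pow_succ_of_leibniz (hd : ∀ α β, d (α * β) = d α * β + γ α * d β)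
    {x u : R} (hγx : γ x = u * x) (n : ℕ) :
    d (x ^ (n + 1)) = x ^ n * (d x * ∑ i ∈ range (n + 1), u ^ i) := by
  induction n with
  | zero => simp
  | succ n ih =>
    rw [pow_succ' x (n + 1), hd, ih, hγx, geom_sum_succ (n := n + 1)]
    ring

end Ring

section Module

variable {R M : Type*} [CommRing R] [AddCommGroup M] [Module R M]

theorem mem_span_singleton_smul_top {x : R} {s : M} :
    s ∈ Ideal.span {x} • (⊤ : Submodule R M) ↔ ∃ t, x • t = s := by
  simp [Submodule.ideal_span_singleton_smul, Submodule.mem_smul_pointwise_iff_exists]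

theorem intCast_smul_mem_of_pow_smul_eq_zero {x c : R} {m : ℤ} (hx : IsSMulRegular M x)
    (hc : x ∣ c - m) {n : ℕ} {t e : M} (h : x ^ n • (c • t + x • e) = 0) :
    m • t ∈ Ideal.span {x} • (⊤ : Submodule R M) := by
  have h0 : c • t + x • e = 0 := (hx.pow n).right_eq_zero_of_smul h
  obtain ⟨b, hb⟩ := hc
  refine mem_span_singleton_smul_top.mpr ⟨-(e + b • t), ?_⟩
  rw [← Int.cast_smul_eq_zsmul R, show (m : R) = c - x * b by rw [← hb]; ring, sub_smul,
    mul_smul, eq_neg_of_add_eq_zero_left h0]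
  simp only [smul_neg, smul_add]
  abel

variable {γ : R →+* R} {d : R → R} {D : M → M}

theorem map_pow_succ_smul_of_leibniz (hd : ∀ α β, d (α * β) = d α * β + γ α * d β)
    (hD : ∀ (α : R) (s : M), D (α • s) = d α • s + γ α • D s) {x u : R} (hγx : γ x = u * x)
    (n : ℕ) (t : M) :
    D (x ^ (n + 1) • t) =
      x ^ n • ((d x * ∑ i ∈ range (n + 1), u ^ i) • t + x • (u ^ (n + 1) • D t)) := by
  rw [hD, map_pow_succ_of_leibniz hd hγx, map_pow, hγx]
  simp only [smul_add, smul_smul]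
  congr 2
  ring

theorem eq_zero_of_map_eq_zero_of_mem_smul_top (hd : ∀ α β, d (α * β) = d α * β + γ α * d β)
    (hD : ∀ (α : R) (s : M), D (α • s) = d α • s + γ α • D s) {x u : R} {a : ℤ}
    (hγx : γ x = u * x) (hdx : x ∣ d x - (a - 1 : ℤ)) (hu : x ∣ u - a)
    (ha : ∀ n : ℕ, a ^ (n + 1) ≠ 1) (hx : IsSMulRegular M x)
    (hZ : ∀ m : ℤ, m ≠ 0 → ∀ t : M, m • t ∈ Ideal.span {x} • (⊤ : Submodule R M) →
      t ∈ Ideal.span {x} • (⊤ : Submodule R M))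
    (hM : IsHausdorff (Ideal.span {x}) M)
    {s : M} (hs : D s = 0) (hsx : s ∈ Ideal.span {x} • (⊤ : Submodule R M)) : s = 0 := by
  have hs_mem (n : ℕ) : ∃ t, x ^ (n + 1) • t = s := by
    induction n with
    | zero => simpa using mem_span_singleton_smul_top.mp hsx
    | succ n ih =>
      obtain ⟨t, rfl⟩ := ih
      rw [map_pow_succ_smul_of_leibniz hd hD hγx] at hs
      have hmt := intCast_smul_mem_of_pow_smul_eq_zero hx (dvd_mul_geom_sum_sub hdx hu _) hs
      obtain ⟨t', rfl⟩ := mem_span_singleton_smul_top.mp (hZ _ (sub_ne_zero.mpr (ha n)) t hmt)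
      exact ⟨t', by rw [← mul_smul, ← pow_succ]⟩
  refine hM.haus s fun n => ?_
  rw [SModEq.zero, Ideal.span_singleton_pow, mem_span_singleton_smul_top]
  cases n with
  | zero => exact ⟨s, by rw [pow_zero, one_smul]⟩
  | succ n => exact hs_mem n

end Module

theorem stmt18_general {W : Type*} [CommRing W] (p : ℕ) (hp : 0 < p)
    (γ : PowerSeries W →ₐ[W] PowerSeries W)
    (hγ : γ (PowerSeries.X + 1) = (PowerSeries.X + 1) ^ (p + 1))
    (dΔ : PowerSeries W →ₗ[W] PowerSeries W)
    (hdΔ : ∀ α β : PowerSeries W, dΔ (α * β) = dΔ α * β + γ α * dΔ β)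
    (hdΔq : dΔ (PowerSeries.X + 1) = qInt (PowerSeries.X + 1 : PowerSeries W) p)
    (M : Type*) [AddCommGroup M] [Module (PowerSeries W) M] [Module W M]
    (hcomp : IsAdicComplete (Ideal.span {(PowerSeries.X : PowerSeries W)}) M)
    (htf : ∀ s : M, (PowerSeries.X : PowerSeries W) • s = 0 → s = 0)
    (hZtf : ∀ n : ℤ, n ≠ 0 → ∀ s : M,
      n • s ∈ (Ideal.span {(PowerSeries.X : PowerSeries W)}) •
          (⊤ : Submodule (PowerSeries W) M) →
        s ∈ (Ideal.span {(PowerSeries.X : PowerSeries W)}) •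
          (⊤ : Submodule (PowerSeries W) M))
    (D : M →ₗ[W] M)
    (hD : ∀ (α : PowerSeries W) (s : M), D (α • s) = dΔ α • s + γ α • D s)
    (s : M) (hs : D s = 0)
    (hsX : s ∈ (Ideal.span {(PowerSeries.X : PowerSeries W)}) •
        (⊤ : Submodule (PowerSeries W) M)) :
    s = 0 := by
  set q : PowerSeries W := PowerSeries.X + 1
  have hX_dvd (k : ℕ) : (PowerSeries.X : PowerSeries W) ∣ qInt q k - k := by
    simpa [q] using sub_one_dvd_qInt_sub_natCast q k
  have hdX : dΔ PowerSeries.X = qInt q p := by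
    rw [← hdΔq, map_add, map_one_of_leibniz (γ := γ.toRingHom) hdΔ, add_zero]
  refine eq_zero_of_map_eq_zero_of_mem_smul_top (γ := γ.toRingHom) (u := qInt q (p + 1))
    (a := p + 1) hdΔ hD ?_ ?_ ?_ ?_ (.of_right_eq_zero_of_smul htf) hZtf hcomp.toIsHausdorff hs hsX
  · simpa [q] using map_sub_one_of_map_eq_pow (γ := γ.toRingHom) hγ
  · simpa [hdX] using hX_dvd p
  · simpa using hX_dvd (p + 1)
  · exact fun n => (one_lt_pow₀ (by omega) n.succ_ne_zero).ne'

/-- Let `R = W[[q−1]]` (with `q = X+1`, so `q−1 = X`), `γ` the `W`-algebra endomorphism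
with `γ(q) = q^{p+1}` and `∂_Δ` the Δ-derivation of `R` with `∂_Δ(q) = (p)_q`.  Let `M` be
a `(q−1)`-adically complete `R`-module with a Δ-derivation `D`, such that `M` is
`(q−1)`-torsion free and `M/(q−1)M` is `ℤ`-torsion free.  Then the canonical map
`ker(D) → M/(q−1)M` is injective: if `D s = 0` and `s ∈ (q−1)M` then `s = 0`. -/
theorem stmt18 {W : Type*} [CommRing W] (p : ℕ) (hp : 0 < p)
    (γ : PowerSeries W →ₐ[W] PowerSeries W)
    (hγ : γ (PowerSeries.X + 1) = (PowerSeries.X + 1) ^ (p + 1))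
    (dΔ : PowerSeries W →ₗ[W] PowerSeries W)
    (hdΔ : ∀ α β : PowerSeries W, dΔ (α * β) = dΔ α * β + γ α * dΔ β)
    (hdΔq : dΔ (PowerSeries.X + 1) = qInt (PowerSeries.X + 1 : PowerSeries W) p)
    (M : Type*) [AddCommGroup M] [Module (PowerSeries W) M] [Module W M]
    [IsScalarTower W (PowerSeries W) M]
    (hcomp : IsAdicComplete (Ideal.span {(PowerSeries.X : PowerSeries W)}) M)
    (htf : ∀ s : M, (PowerSeries.X : PowerSeries W) • s = 0 → s = 0)
    (hZtf : ∀ n : ℤ, n ≠ 0 → ∀ s : M,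
      n • s ∈ (Ideal.span {(PowerSeries.X : PowerSeries W)}) •
          (⊤ : Submodule (PowerSeries W) M) →
        s ∈ (Ideal.span {(PowerSeries.X : PowerSeries W)}) •
          (⊤ : Submodule (PowerSeries W) M))
    (D : M →ₗ[W] M)
    (hD : ∀ (α : PowerSeries W) (s : M), D (α • s) = dΔ α • s + γ α • D s)
    (s : M) (hs : D s = 0)
    (hsX : s ∈ (Ideal.span {(PowerSeries.X : PowerSeries W)}) •
        (⊤ : Submodule (PowerSeries W) M)) :
    s = 0 :=
  stmt18_general p hp γ hγ dΔ hdΔ hdΔq M hcomp htf hZtf D hD s hs hsX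
end
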